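/- Let (X,d) be a distance space such that (T_d,d∞) is a metric space (T_d is non-empty and d∞(f,g) < ∞ for all f,g ∈ T_d), and let ρ be a minimal element of M(d) with respect to ⪯. Then there is an isometric embedding from the metric tight span (T_ρ,d∞) of (X,ρ) into (T_d,d∞). -/

import Mathlib

/-!
A minimal `ρ ∈ M(d)` cannot be shortened: if two members of `P_d` lying below the rows
`ρ(a,·)` and `ρ(b,·)` are uniformly `s`-close, then gluing an edge of length `s` between `a` and
`b` gives a pseudometric in `M(d)` below `ρ`, so `ρ(a,b) ≤ s`. A Zorn argument over families that
are Lipschitz in their index yields `α_a ∈ T_d` with `α_a ≤ ρ(a,·)` and `|α_a - α_b| ≤ ρ(a,b)`,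
hence an isometric copy `a ↦ α_a` of `(X,ρ)` in `T_d`. The same argument applied to the
inf-convolutions `f ↦ inf_x (α_x + f(x))`, indexed by `T_ρ`, gives a `1`-Lipschitz map
`Φ : T_ρ → T_d` with `|Φ f - α_x| ≤ f(x)`. Combined with `f(z) = sup_w (ρ(z,w) - f(w))` on `T_ρ`
and the isometry on `X`, this estimate shows that `Φ` does not shrink distances either.
-/

open scoped ENNReal

section CoreDefs

variable {Y : Type*}

/-- A distance space: symmetric, nonnegative, vanishing on the diagonal. -/
def IsDistance (d : Y → Y → ℝ) : Prop :=
  (∀ x y, 0 ≤ d x y) ∧ (∀ x y, d x y = d y x) ∧ ∀ x, d x x = 0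

/-- The set `P_d` of functions dominating the distance `d`. -/
def Pd (d : Y → Y → ℝ) : Set (Y → ℝ) :=
  {f | ∀ x y, d x y ≤ f x + f y}

/-- The tight span `T_d`: pointwise-minimal elements of `P_d`. -/
def Td (d : Y → Y → ℝ) : Set (Y → ℝ) :=
  {f | f ∈ Pd d ∧ ∀ g ∈ Pd d, g ≤ f → g = f}

/-- The sup-distance `d∞(f,g) = sup_x |f x - g x|`, valued in `[0,∞]`. -/
noncomputable def dInfty (f g : Y → ℝ) : ℝ≥0∞ :=
  ⨆ y, edist (f y) (g y)

/-- `κ(x) = {f ∈ T_d : f x = 0}`. -/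
def kappa (d : Y → Y → ℝ) (x : Y) : Set (Y → ℝ) :=
  {f | f ∈ Td d ∧ f x = 0}

/-- A pseudometric: symmetric, nonnegative, vanishing on the diagonal,
satisfying the triangle inequality. -/
def IsPseudometric (ρ : Y → Y → ℝ) : Prop :=
  (∀ x y, 0 ≤ ρ x y) ∧ (∀ x y, ρ x y = ρ y x) ∧ (∀ x, ρ x x = 0) ∧
  ∀ x y z, ρ x z ≤ ρ x y + ρ y z

/-- `M(d)`: the set of pseudometrics dominating `d`. -/
def Md (d : Y → Y → ℝ) : Set (Y → Y → ℝ) :=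
  {ρ | IsPseudometric ρ ∧ ∀ x y, d x y ≤ ρ x y}

end CoreDefs

section TightSpan

variable {X : Type*} {d ρ : X → X → ℝ}

lemma nonneg_of_mem_Pd {f : X → ℝ} (hf : f ∈ Pd d) {z : X} (hz : 0 ≤ d z z) : 0 ≤ f z := by
  linarith [hf z z]

lemma apply_le_of_mem_Td (hsymm : ∀ x y, d x y = d y x) (hdiag : ∀ x, d x x = 0)
    {f : X → ℝ} (hf : f ∈ Td d) {z : X} {B : ℝ} (h : ∀ w, d z w - f w ≤ B) : f z ≤ B := by
  classical
  by_contra! hlt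
  have hfz : 0 ≤ f z := nonneg_of_mem_Pd hf.1 (hdiag z).ge
  set f' := Function.update f z (max B 0)
  have hf' : f' ∈ Pd d := by
    intro x y
    simp only [f', Function.update_apply]
    split_ifs with hx hy hy
    · rw [hx, hy, hdiag]; linarith [le_max_right B 0]
    · subst hx; linarith [h y, le_max_left B 0]
    · subst hy; linarith [h x, hsymm x y, le_max_left B 0]
    · exact hf.1 x y
  have hle : f' ≤ f := by
    intro w
    simp only [f', Function.update_apply]
    split_ifs with hw
    · subst hw; exact max_le hlt.le hfz
    · exact le_rfl
  have hfz' : max B 0 = f z := by simpa [f'] using congrFun (hf.2 f' hf' hle) z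
  have := h z
  rw [hdiag] at this
  rcases max_choice B 0 with hB | hB <;> linarith

lemma le_add_of_mem_Td_of_le_add (hsymm : ∀ x y, d x y = d y x) (hdiag : ∀ x, d x x = 0)
    {p q : X → ℝ} (hp : p ∈ Pd d) (hq : q ∈ Td d) {c : ℝ} (h : ∀ x, p x ≤ q x + c) (x : X) :
    q x ≤ p x + c :=
  apply_le_of_mem_Td hsymm hdiag hq fun w => by linarith [hp x w, h w]

lemma apply_le_apply_add_of_mem_Td (hρ : IsPseudometric ρ) {f : X → ℝ} (hf : f ∈ Td ρ)
    (z w : X) : f z ≤ f w + ρ z w :=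
  apply_le_of_mem_Td hρ.2.1 hρ.2.2.1 hf fun u => by linarith [hρ.2.2.2 z w u, hf.1 w u]

lemma iInf_mem_Pd {ι : Type*} [Nonempty ι] {F : ι → X → ℝ} (hF : ∀ a, F a ∈ Pd d)
    (hchain : ∀ a b, F a ≤ F b ∨ F b ≤ F a) : (fun x => ⨅ a, F a x) ∈ Pd d := by
  intro x y
  have hpair : ∀ a b, d x y ≤ F a x + F b y := fun a b => by
    rcases hchain a b with hab | hba
    · linarith [hF a x y, hab y]
    · linarith [hF b x y, hba x]
  have : d x y - ⨅ b, F b y ≤ ⨅ a, F a x :=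
    le_ciInf fun a => sub_le_comm.1 (le_ciInf fun b => by linarith [hpair a b])
  linarith

/-- By Zorn, take a minimal `N`-Lipschitz family in `P_d` below `h₀`; its members are minimal in
`P_d` because lowering `g i` to `u` propagates to the family `j ↦ min (g j) (u + N i j)`. -/
theorem exists_family_mem_Td (hdiag : ∀ x, 0 ≤ d x x) {I : Type*} (N : I → I → ℝ)
    (hN_self : ∀ i, N i i = 0) (hN_triangle : ∀ i j k, N i j ≤ N i k + N j k)
    (h₀ : I → X → ℝ) (hP : ∀ i, h₀ i ∈ Pd d) (hLip : ∀ i j z, h₀ i z ≤ h₀ j z + N i j) :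
    ∃ g : I → X → ℝ, (∀ i, g i ∈ Td d) ∧ g ≤ h₀ ∧ ∀ i j z, g i z ≤ g j z + N i j := by
  have hN_nonneg : ∀ i j, 0 ≤ N i j := fun i j => by linarith [hN_triangle i i j, hN_self i]
  let S : Set (I → X → ℝ) := {H | (∀ i, H i ∈ Pd d) ∧ ∀ i j z, H i z ≤ H j z + N i j}
  have hchain : ∀ c ⊆ S, IsChain (· ≥ ·) c → ∀ H ∈ c, ∃ lb ∈ S, ∀ H' ∈ c, lb ≤ H' := by
    intro c hcS hc H hH
    have : Nonempty c := ⟨⟨H, hH⟩⟩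
    have hbdd : ∀ i z, BddBelow (Set.range fun H : c => H.1 i z) := fun i z =>
      ⟨0, by rintro _ ⟨H, rfl⟩; exact nonneg_of_mem_Pd ((hcS H.2).1 i) (hdiag z)⟩
    refine ⟨fun i z => ⨅ H : c, H.1 i z, ⟨fun i => iInf_mem_Pd (fun H => (hcS H.2).1 i)
      fun H H' => ?_, fun i j z => ?_⟩, fun H' hH' i z => ciInf_le (hbdd i z) ⟨H', hH'⟩⟩
    · exact (hc.total H.2 H'.2).symm.imp (· i) (· i)
    · have : (⨅ H : c, H.1 i z) - N i j ≤ ⨅ H : c, H.1 j z :=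
        le_ciInf fun H => by linarith [ciInf_le (hbdd i z) H, (hcS H.2).2 i j z]
      linarith
  obtain ⟨g, hgh, hgmin⟩ : ∃ g, g ≤ h₀ ∧ Minimal (· ∈ S) g :=
    @zorn_le_nonempty₀ (I → X → ℝ)ᵒᵈ _ S hchain h₀ ⟨hP, hLip⟩
  have hgS := hgmin.prop
  refine ⟨g, fun i => ⟨hgS.1 i, fun u hu hug => ?_⟩, hgh, hgS.2⟩
  let g' : I → X → ℝ := fun j z => min (g j z) (u z + N i j)
  have hg'S : g' ∈ S := by
    refine ⟨fun j x y => ?_, fun j k z => ?_⟩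
    · have hux : u x ≤ g j x + N i j := (hug x).trans (hgS.2 i j x)
      have huy : u y ≤ g j y + N i j := (hug y).trans (hgS.2 i j y)
      rcases min_choice (g j x) (u x + N i j) with hx | hx <;>
        rcases min_choice (g j y) (u y + N i j) with hy | hy <;>
        simp only [g', hx, hy] <;> linarith [hgS.1 j x y, hu x y, hN_nonneg i j]
    · simp only [g', ← min_add_add_right]
      exact min_le_min (hgS.2 j k z) (by linarith [hN_triangle i j k])
  have hgg' : g ≤ g' := hgmin.2 hg'S fun j z => min_le_left _ _
  funext z
  have := hgg' i z
  simp only [g', hN_self, add_zero] at this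
  exact le_antisymm (hug z) (le_min_iff.1 this).2

end TightSpan

section Shortcut

variable {X : Type*} {d ρ : X → X → ℝ}

/-- `ρ` with an extra edge of length `s` joining `a` and `b`. -/
def shortcut (ρ : X → X → ℝ) (a b : X) (s : ℝ) (x y : X) : ℝ :=
  min (ρ x y) (min (ρ x a + s + ρ b y) (ρ x b + s + ρ a y))

lemma shortcut_le (ρ : X → X → ℝ) (a b : X) (s : ℝ) : shortcut ρ a b s ≤ ρ :=
  fun _ _ => min_le_left _ _

lemma shortcut_cases (ρ : X → X → ℝ) (a b : X) (s : ℝ) (x y : X) :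
    shortcut ρ a b s x y = ρ x y ∨ shortcut ρ a b s x y = ρ x a + s + ρ b y ∨
      shortcut ρ a b s x y = ρ x b + s + ρ a y := by
  unfold shortcut
  rcases min_choice (ρ x y) (min (ρ x a + s + ρ b y) (ρ x b + s + ρ a y)) with h | h <;> rw [h]
  · exact Or.inl rfl
  · exact Or.inr (min_choice _ _)

lemma isPseudometric_shortcut (hρ : IsPseudometric ρ) (a b : X) {s : ℝ} (hs : 0 ≤ s) :
    IsPseudometric (shortcut ρ a b s) := by
  obtain ⟨hnonneg, hsymm, hdiag, htri⟩ := hρ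
  have hle : ∀ x y, shortcut ρ a b s x y ≤ ρ x y ∧ shortcut ρ a b s x y ≤ ρ x a + s + ρ b y ∧
      shortcut ρ a b s x y ≤ ρ x b + s + ρ a y := fun x y =>
    ⟨min_le_left _ _, (min_le_right _ _).trans (min_le_left _ _),
      (min_le_right _ _).trans (min_le_right _ _)⟩
  have hnonneg' : ∀ x y, 0 ≤ shortcut ρ a b s x y := fun x y => by
    rcases shortcut_cases ρ a b s x y with h | h | h <;> rw [h] <;>
      linarith [hnonneg x y, hnonneg x a, hnonneg b y, hnonneg x b, hnonneg a y]
  refine ⟨hnonneg', fun x y => ?_, fun x => ?_, fun x y z => ?_⟩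
  · simp only [shortcut, hsymm x y, hsymm x a, hsymm b y, hsymm x b, hsymm a y,
      min_comm (ρ a x + s + ρ y b)]
    ring_nf
  · exact le_antisymm ((hle x x).1.trans (hdiag x).le) (hnonneg' x x)
  · obtain ⟨h1, h2, h3⟩ := hle x z
    rcases shortcut_cases ρ a b s x y with hxy | hxy | hxy <;>
      rcases shortcut_cases ρ a b s y z with hyz | hyz | hyz <;> rw [hxy, hyz] <;>
      linarith [htri x y z, htri x y a, htri x y b, htri b y z, htri a y z, htri x a z,
        htri x b z, hnonneg b y, hnonneg y b, hnonneg a y, hnonneg y a]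

lemma le_of_minimal_of_mem_Pd (hρ : ρ ∈ Md d) (hmin : ∀ ρ' ∈ Md d, ρ' ≤ ρ → ρ' = ρ) {a b : X}
    {p q : X → ℝ} (hp : p ∈ Pd d) (hq : q ∈ Pd d) (hpa : ∀ z, p z ≤ ρ a z)
    (hqb : ∀ z, q z ≤ ρ b z) {s : ℝ} (hs : 0 ≤ s) (hpq : ∀ z, |p z - q z| ≤ s) : ρ a b ≤ s := by
  obtain ⟨hpm, hdom⟩ := hρ
  have hsc : shortcut ρ a b s ∈ Md d := by
    refine ⟨isPseudometric_shortcut hpm a b hs, fun x y => le_min (hdom x y) (le_min ?_ ?_)⟩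
    · linarith [hp x y, hpa x, hpm.2.1 x a, hqb y, (abs_le.1 (hpq y)).2]
    · linarith [hq x y, hqb x, hpm.2.1 x b, hpa y, (abs_le.1 (hpq y)).1]
  have heq := congrFun₂ (hmin _ hsc (shortcut_le ρ a b s)) a b
  have : shortcut ρ a b s a b ≤ ρ a a + s + ρ b b := (min_le_right _ _).trans (min_le_left _ _)
  linarith [hpm.2.2.1 a, hpm.2.2.1 b]

end Shortcut

section SupDistance

variable {Y Z : Type*}

lemma dInfty_le_ofReal_iff {f g : Y → ℝ} {s : ℝ} (hs : 0 ≤ s) :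
    dInfty f g ≤ ENNReal.ofReal s ↔ ∀ y, |f y - g y| ≤ s := by
  simp only [dInfty, iSup_le_iff, edist_dist, Real.dist_eq, ENNReal.ofReal_le_ofReal_iff hs]

lemma dInfty_self (f : Y → ℝ) : dInfty f f = 0 := by
  simp [dInfty]

lemma abs_sub_le_toReal_dInfty {f g : Y → ℝ} (h : dInfty f g ≠ ⊤) (y : Y) :
    |f y - g y| ≤ (dInfty f g).toReal :=
  (dInfty_le_ofReal_iff ENNReal.toReal_nonneg).1 (ENNReal.ofReal_toReal h).ge y

lemma toReal_dInfty_le {f g : Y → ℝ} {s : ℝ} (hs : 0 ≤ s) (h : ∀ y, |f y - g y| ≤ s) :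
    (dInfty f g).toReal ≤ s :=
  ENNReal.toReal_le_of_le_ofReal hs ((dInfty_le_ofReal_iff hs).2 h)

lemma dInfty_eq_of_forall_abs_sub_le_iff {f g : Y → ℝ} {f' g' : Z → ℝ}
    (h : ∀ s, 0 ≤ s → ((∀ y, |f y - g y| ≤ s) ↔ ∀ z, |f' z - g' z| ≤ s)) :
    dInfty f g = dInfty f' g' := by
  refine eq_of_forall_ge_iff fun c => ?_
  induction c using ENNReal.recTopCoe with
  | top => simp
  | coe r =>
    rw [← ENNReal.ofReal_coe_nnreal, dInfty_le_ofReal_iff r.coe_nonneg,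
      dInfty_le_ofReal_iff r.coe_nonneg, h r r.coe_nonneg]

lemma dInfty_ne_top_of_mem_Td [Nonempty Y] {ρ : Y → Y → ℝ} (hρ : IsPseudometric ρ)
    {f g : Y → ℝ} (hf : f ∈ Td ρ) (hg : g ∈ Td ρ) : dInfty f g ≠ ⊤ := by
  obtain ⟨w⟩ := ‹Nonempty Y›
  have hw : 0 ≤ f w + g w := by linarith [hf.1 w w, hg.1 w w, hρ.1 w w]
  refine ne_top_of_le_ne_top ENNReal.ofReal_ne_top ((dInfty_le_ofReal_iff hw).2 fun z => ?_)
  rw [abs_sub_le_iff]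
  constructor
  · linarith [apply_le_apply_add_of_mem_Td hρ hf z w, hg.1 z w]
  · linarith [apply_le_apply_add_of_mem_Td hρ hg z w, hf.1 z w]

end SupDistance

section InfConvolution

variable {X : Type*} {d ρ : X → X → ℝ} {α : X → X → ℝ} {f : X → ℝ}

noncomputable def infConv (α : X → X → ℝ) (f : X → ℝ) (z : X) : ℝ := ⨅ x, α x z + f x

lemma bddBelow_infConv (hαρ : ∀ a b z, α a z ≤ α b z + ρ a b) (hf : f ∈ Pd ρ) (z : X) :
    BddBelow (Set.range fun x => α x z + f x) :=
  ⟨α z z - f z, by rintro _ ⟨x, rfl⟩; linarith [hαρ z x z, hf z x]⟩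

lemma infConv_le (hαρ : ∀ a b z, α a z ≤ α b z + ρ a b) (hf : f ∈ Pd ρ) (z x : X) :
    infConv α f z ≤ α x z + f x :=
  ciInf_le (bddBelow_infConv hαρ hf z) x

lemma infConv_mem_Pd [Nonempty X] (hα : ∀ a, α a ∈ Pd d)
    (hαρ : ∀ a b z, α a z ≤ α b z + ρ a b) (hf : f ∈ Pd ρ) : infConv α f ∈ Pd d := by
  intro z w
  have : d z w - infConv α f w ≤ infConv α f z := le_ciInf fun x => sub_le_comm.1 <|
    le_ciInf fun y => by linarith [hα x z w, hαρ x y w, hf x y]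
  linarith

lemma infConv_le_infConv_add [Nonempty X] (hαρ : ∀ a b z, α a z ≤ α b z + ρ a b)
    (hf : f ∈ Pd ρ) {g : X → ℝ} {c : ℝ} (hfg : ∀ x, f x ≤ g x + c) (z : X) :
    infConv α f z ≤ infConv α g z + c := by
  have : infConv α f z - c ≤ infConv α g z :=
    le_ciInf fun x => by linarith [infConv_le hαρ hf z x, hfg x]
  linarith

end InfConvolution

section Embedding

variable {X : Type*} {d ρ : X → X → ℝ}

theorem exists_isometric_family_mem_Td_of_minimal (hdiag : ∀ x, d x x = 0) (hρ : ρ ∈ Md d)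
    (hmin : ∀ ρ' ∈ Md d, ρ' ≤ ρ → ρ' = ρ) :
    ∃ α : X → X → ℝ, (∀ a, α a ∈ Td d) ∧ ∀ a b s, (∀ z, |α a z - α b z| ≤ s) ↔ ρ a b ≤ s := by
  have ⟨⟨_, hsymm, hdiagρ, htri⟩, hdom⟩ := hρ
  obtain ⟨α, hαTd, hαρ, hαLip⟩ := exists_family_mem_Td (fun x => (hdiag x).ge) ρ hdiagρ
    (fun i j k => by linarith [htri i k j, hsymm k j]) ρ
    (fun a x y => by linarith [hdom x y, htri x a y, hsymm x a])
    (fun a b z => by linarith [htri a b z])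
  refine ⟨α, hαTd, fun a b s => ⟨fun h => ?_, fun h z => ?_⟩⟩
  · exact le_of_minimal_of_mem_Pd hρ hmin (hαTd a).1 (hαTd b).1 (hαρ a) (hαρ b)
      ((abs_nonneg _).trans (h a)) h
  · rw [abs_sub_le_iff]
    constructor <;> linarith [hαLip a b z, hαLip b a z, hsymm a b]

theorem exists_isometry_Td_of_isometric_family [Nonempty X] (hsymm : ∀ x y, d x y = d y x)
    (hdiag : ∀ x, d x x = 0) (hρ : IsPseudometric ρ) {α : X → X → ℝ} (hαTd : ∀ a, α a ∈ Td d)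
    (hα : ∀ a b s, (∀ z, |α a z - α b z| ≤ s) ↔ ρ a b ≤ s) :
    ∃ Φ : Td ρ → X → ℝ, (∀ f, Φ f ∈ Td d) ∧
      ∀ f g : Td ρ, ∀ s, (∀ u, |Φ f u - Φ g u| ≤ s) ↔ ∀ z, |f.1 z - g.1 z| ≤ s := by
  have hαρ : ∀ a b z, α a z ≤ α b z + ρ a b := fun a b z => by
    linarith [(abs_le.1 ((hα a b _).2 le_rfl z)).2]
  let N : Td ρ → Td ρ → ℝ := fun f g => (dInfty f.1 g.1).toReal
  have hN : ∀ f g : Td ρ, ∀ z, |f.1 z - g.1 z| ≤ N f g := fun f g =>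
    abs_sub_le_toReal_dInfty (dInfty_ne_top_of_mem_Td hρ f.2 g.2)
  have hN_le : ∀ f g : Td ρ, ∀ s, (∀ z, |f.1 z - g.1 z| ≤ s) → N f g ≤ s := fun f g s h =>
    toReal_dInfty_le ((abs_nonneg _).trans (h (Classical.arbitrary X))) h
  obtain ⟨Φ, hΦTd, hΦle, hΦLip⟩ := exists_family_mem_Td (fun x => (hdiag x).ge) N
    (fun f => by simp [N, dInfty_self])
    (fun f g k => hN_le f g _ fun z => by
      linarith [abs_sub_le (f.1 z) (k.1 z) (g.1 z), hN f k z, hN g k z,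
        abs_sub_comm (k.1 z) (g.1 z)])
    (fun f => infConv α f.1) (fun f => infConv_mem_Pd (fun a => (hαTd a).1) hαρ f.2.1)
    (fun f g => infConv_le_infConv_add hαρ f.2.1 fun x => by linarith [(abs_le.1 (hN f g x)).2])
  have hΦα : ∀ f x u, |Φ f u - α x u| ≤ f.1 x := fun f x u => by
    have hup : ∀ v, Φ f v ≤ α x v + f.1 x := fun v =>
      (hΦle f v).trans (infConv_le hαρ f.2.1 v x)
    have hlow := le_add_of_mem_Td_of_le_add hsymm hdiag (hΦTd f).1 (hαTd x) hup u
    rw [abs_sub_le_iff]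
    constructor <;> linarith [hup u]
  have hle_of_Φ : ∀ f g : Td ρ, ∀ s, (∀ u, |Φ f u - Φ g u| ≤ s) → ∀ z, f.1 z ≤ g.1 z + s := by
    intro f g s h z
    refine apply_le_of_mem_Td hρ.2.1 hρ.2.2.1 f.2 fun w => ?_
    -- `ρ z w = ‖α z - α w‖ ≤ ‖α z - Φ g‖ + ‖Φ g - Φ f‖ + ‖Φ f - α w‖`
    have : ρ z w ≤ g.1 z + s + f.1 w := (hα z w _).1 fun u => by
      obtain ⟨hg₁, hg₂⟩ := abs_le.1 (hΦα g z u)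
      obtain ⟨hf₁, hf₂⟩ := abs_le.1 (hΦα f w u)
      obtain ⟨h₁, h₂⟩ := abs_le.1 (h u)
      rw [abs_le]
      constructor <;> linarith
    linarith
  refine ⟨Φ, hΦTd, fun f g s => ⟨fun h z => abs_sub_le_iff.2 ⟨?_, ?_⟩,
    fun h u => abs_sub_le_iff.2 ⟨?_, ?_⟩⟩⟩
  · linarith [hle_of_Φ f g s h z]
  · linarith [hle_of_Φ g f s (fun u => abs_sub_comm (Φ g u) (Φ f u) ▸ h u) z]
  · linarith [hΦLip f g u, hN_le f g s h]
  · linarith [hΦLip g f u, hN_le g f s fun z => abs_sub_comm (g.1 z) (f.1 z) ▸ h z]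

end Embedding

theorem statement11_general {X : Type*} [Nonempty X] (d : X → X → ℝ)
    (hd : IsDistance d)
    (ρ : X → X → ℝ) (hρ : ρ ∈ Md d)
    (hmin : ∀ ρ' ∈ Md d, ρ' ≤ ρ → ρ' = ρ) :
    ∃ φ : (X → ℝ) → (X → ℝ),
      (∀ f ∈ Td ρ, φ f ∈ Td d) ∧
      ∀ f ∈ Td ρ, ∀ g ∈ Td ρ, dInfty (φ f) (φ g) = dInfty f g := by
  classical
  obtain ⟨-, hsymm, hdiag⟩ := hd
  obtain ⟨α, hαTd, hα⟩ := exists_isometric_family_mem_Td_of_minimal hdiag hρ hmin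
  obtain ⟨Φ, hΦTd, hΦ⟩ := exists_isometry_Td_of_isometric_family hsymm hdiag hρ.1 hαTd hα
  refine ⟨fun f => if hf : f ∈ Td ρ then Φ ⟨f, hf⟩ else f, fun f hf => ?_, fun f hf g hg => ?_⟩
  · simpa [dif_pos hf] using hΦTd ⟨f, hf⟩
  · simp only [dif_pos hf, dif_pos hg]
    exact dInfty_eq_of_forall_abs_sub_le_iff fun s _ => hΦ ⟨f, hf⟩ ⟨g, hg⟩ s

/-- If `(T_d, d∞)` is a metric space and `ρ` is minimal in `M(d)`, then the
metric tight span `(T_ρ, d∞)` embeds isometrically into `(T_d, d∞)`. -/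
theorem statement11 {X : Type*} [Nonempty X] (d : X → X → ℝ)
    (hd : IsDistance d) (hne : (Td d).Nonempty)
    (hfin : ∀ f ∈ Td d, ∀ g ∈ Td d, dInfty f g ≠ ⊤)
    (ρ : X → X → ℝ) (hρ : ρ ∈ Md d)
    (hmin : ∀ ρ' ∈ Md d, ρ' ≤ ρ → ρ' = ρ) :
    ∃ φ : (X → ℝ) → (X → ℝ),
      (∀ f ∈ Td ρ, φ f ∈ Td d) ∧
      ∀ f ∈ Td ρ, ∀ g ∈ Td ρ, dInfty (φ f) (φ g) = dInfty f g :=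
  statement11_general d hd ρ hρ hmin
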